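/- Let G be a connected compact semisimple Lie group, U an irreducible unitary representation on H with highest weight vector ξ of norm 1, and for each n let ξⁿ = ξ^{⊗n} ∈ H^{⊗n}. Let h_n(x) = d_n |⟨U_x^{⊗n} ξⁿ, ξⁿ⟩|² where d_n is a normalizing constant making ∫ h_n dx = 1. Then h_n(x) = d_n |⟨U_x ξ, ξ⟩|^{2n}, and the probability measures h_n(x)dx on G converge weak-* to the Dirac delta at the stability subgroup H₀ of P; that is, ∫_G f(x) h_n(x) dx → f(e) for every continuous function f on G/H₀ (viewed as an H₀-invariant function on G). -/

import Mathlib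

/-!
With `g x = ‖⟪U x ξ, ξ⟫‖` we have `0 ≤ g ≤ 1`, `g 1 = 1`, and `g x = 1` only when `U x ξ ∈ ℂ ξ`
(equality in Cauchy–Schwarz), where `f x = f 1` by invariance. The theorem is then a Laplace-type
concentration for `gⁿ`: on the compact set where `|f - f 1| ≥ ε` we have `g ≤ m < 1`, while for
`m < t < 1` the open set `{g > t}` has positive Haar measure, so `∫ gⁿ ≥ c tⁿ`. Hence that set
contributes `O((m / t)ⁿ)` to the normalized average and its complement at most `ε`.
-/

open MeasureTheory Filter Topology InnerProductSpace

lemma IsCompact.exists_lt_forall_le {X : Type*} [TopologicalSpace X] {K : Set X}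
    (hK : IsCompact K) {g : X → ℝ} (hg : ContinuousOn g K) {c : ℝ} (hlt : ∀ x ∈ K, g x < c) :
    ∃ m < c, ∀ x ∈ K, g x ≤ m := by
  rcases K.eq_empty_or_nonempty with rfl | hne
  · exact ⟨c - 1, by linarith, by simp⟩
  · obtain ⟨y, hy, hmax⟩ := hK.exists_isMaxOn hne hg
    exact ⟨g y, hlt y hy, fun x hx => hmax hx⟩

lemma abs_div_sub_le_of_abs_sub_mul_le {N D a δ E : ℝ} (hD : 0 < D)
    (h : |N - a * D| ≤ δ * D + E) : |N / D - a| ≤ δ + E / D := by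
  rw [show N / D - a = (N - a * D) / D by field_simp, abs_div, abs_of_pos hD, div_le_iff₀ hD,
    add_mul, div_mul_cancel₀ _ hD.ne']
  exact h

lemma exists_eq_smul_of_norm_inner_eq_one {𝕜 E : Type*} [RCLike 𝕜] [NormedAddCommGroup E]
    [InnerProductSpace 𝕜 E] {x y : E} (hx : ‖x‖ = 1) (hy : ‖y‖ = 1) (h : ‖⟪x, y⟫_𝕜‖ = 1) :
    ∃ c : 𝕜, x = c • y := by
  have hne : ∀ {v : E}, ‖v‖ = 1 → v ≠ 0 := fun hv h0 => by simp [h0] at hv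
  obtain ⟨c, -, hc⟩ := (norm_inner_eq_norm_iff (𝕜 := 𝕜) (hne hy) (hne hx)).1
    (by rw [norm_inner_symm, h, hx, hy, one_mul])
  exact ⟨c, hc⟩

lemma Continuous.integrable_of_compactSpace {X E : Type*} [TopologicalSpace X] [CompactSpace X]
    [MeasurableSpace X] [OpensMeasurableSpace X] {μ : Measure X} [IsFiniteMeasure μ]
    [NormedAddCommGroup E] {f : X → E} (hf : Continuous f) : Integrable f μ :=
  hf.integrable_of_hasCompactSupport (HasCompactSupport.of_compactSpace f)

section PowerConcentration

variable {X : Type*} [TopologicalSpace X] [CompactSpace X] [MeasurableSpace X]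
  [OpensMeasurableSpace X] {μ : Measure X} [IsFiniteMeasure μ] {f g : X → ℝ}

lemma exists_pos_forall_pow_mul_le_integral_pow [μ.IsOpenPosMeasure] (hg : Continuous g)
    (hg0 : ∀ x, 0 ≤ g x) {t : ℝ} (ht : 0 ≤ t) {x₀ : X} (hx₀ : t < g x₀) :
    ∃ c > 0, ∀ n : ℕ, t ^ n * c ≤ ∫ x, g x ^ n ∂μ := by
  set S := {x | t < g x}
  have hS : IsOpen S := isOpen_lt continuous_const hg
  refine ⟨μ.real S, ENNReal.toReal_pos (hS.measure_ne_zero μ ⟨x₀, hx₀⟩) (measure_ne_top μ S),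
    fun n => ?_⟩
  have hint : Integrable (fun x => g x ^ n) μ := (hg.pow n).integrable_of_compactSpace
  calc t ^ n * μ.real S ≤ ∫ x in S, g x ^ n ∂μ :=
        setIntegral_ge_of_const_le_real hS.measurableSet (measure_ne_top μ S)
          (fun x hx => pow_le_pow_left₀ ht (le_of_lt hx) n) hint.integrableOn
    _ ≤ ∫ x, g x ^ n ∂μ :=
        setIntegral_le_integral hint (ae_of_all _ fun x => pow_nonneg (hg0 x) n)

lemma abs_integral_mul_pow_sub_le (hf : Continuous f) (hg : Continuous g) (hg0 : ∀ x, 0 ≤ g x)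
    {a δ C m : ℝ} (hδ : 0 ≤ δ) (hm : 0 ≤ m) (hC : ∀ x, |f x - a| ≤ C)
    (hfar : ∀ x, δ ≤ |f x - a| → g x ≤ m) (n : ℕ) :
    |∫ x, f x * g x ^ n ∂μ - a * ∫ x, g x ^ n ∂μ|
      ≤ δ * ∫ x, g x ^ n ∂μ + μ.real Set.univ * (C * m ^ n) := by
  have hpt : ∀ x, |(f x - a) * g x ^ n| ≤ δ * g x ^ n + C * m ^ n := fun x => by
    have hCm : 0 ≤ C * m ^ n := mul_nonneg ((abs_nonneg _).trans (hC x)) (pow_nonneg hm n)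
    have hgn : 0 ≤ g x ^ n := pow_nonneg (hg0 x) n
    rw [abs_mul, abs_of_nonneg hgn]
    rcases le_or_gt δ |f x - a| with hx | hx
    · nlinarith [hC x, pow_le_pow_left₀ (hg0 x) (hfar x hx) n]
    · nlinarith
  have hint : ∀ {φ : X → ℝ}, Continuous φ → Integrable φ μ := fun hφ =>
    hφ.integrable_of_compactSpace
  calc |∫ x, f x * g x ^ n ∂μ - a * ∫ x, g x ^ n ∂μ|
      = |∫ x, (f x - a) * g x ^ n ∂μ| := by
        simp only [sub_mul]
        rw [integral_sub (hint (by fun_prop)) (hint (by fun_prop)), integral_const_mul]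
    _ ≤ ∫ x, |(f x - a) * g x ^ n| ∂μ := abs_integral_le_integral_abs
    _ ≤ ∫ x, (δ * g x ^ n + C * m ^ n) ∂μ :=
        integral_mono (hint (by fun_prop)) (hint (by fun_prop)) hpt
    _ = δ * ∫ x, g x ^ n ∂μ + μ.real Set.univ * (C * m ^ n) := by
        rw [integral_add (hint (by fun_prop)) (hint (by fun_prop)), integral_const_mul,
          integral_const, smul_eq_mul]

theorem tendsto_integral_mul_pow_div_integral_pow [μ.IsOpenPosMeasure] (hf : Continuous f)
    (hg : Continuous g) (hg0 : ∀ x, 0 ≤ g x) (hg1 : ∀ x, g x ≤ 1) {x₀ : X} (hgx₀ : g x₀ = 1)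
    (hfg : ∀ x, g x = 1 → f x = f x₀) :
    Tendsto (fun n : ℕ => (∫ x, f x * g x ^ n ∂μ) / ∫ x, g x ^ n ∂μ) atTop (𝓝 (f x₀)) := by
  rw [Metric.tendsto_nhds]
  intro ε hε
  obtain ⟨m, hm0, hm1, hfar⟩ : ∃ m, 0 ≤ m ∧ m < 1 ∧ ∀ x, ε / 2 ≤ |f x - f x₀| → g x ≤ m := by
    have hK : IsClosed {x | ε / 2 ≤ |f x - f x₀|} := isClosed_le continuous_const (by fun_prop)
    obtain ⟨m, hm1, hm⟩ := hK.isCompact.exists_lt_forall_le hg.continuousOn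
      fun x (hx : ε / 2 ≤ |f x - f x₀|) => (hg1 x).lt_of_ne fun h => by
        rw [hfg x h, sub_self, abs_zero] at hx; linarith
    exact ⟨max m 0, le_max_right _ _, max_lt hm1 one_pos,
      fun x hx => (hm x hx).trans (le_max_left _ _)⟩
  obtain ⟨t, hmt, ht1⟩ := exists_between hm1
  have ht0 : 0 < t := hm0.trans_lt hmt
  obtain ⟨c, hc, hden⟩ := exists_pos_forall_pow_mul_le_integral_pow (μ := μ) hg hg0
    ht0.le (x₀ := x₀) (hgx₀ ▸ ht1)
  obtain ⟨C, hC⟩ := isCompact_univ.exists_bound_of_continuousOn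
    (hf.sub continuous_const : Continuous fun x => f x - f x₀).continuousOn
  have hC0 : 0 ≤ C := (norm_nonneg _).trans (hC x₀ trivial)
  have hsmall : Tendsto (fun n : ℕ => μ.real Set.univ * C / c * (m / t) ^ n) atTop (𝓝 0) := by
    simpa using (tendsto_pow_atTop_nhds_zero_of_lt_one (by positivity)
      ((div_lt_one (by positivity)).2 (by linarith))).const_mul (μ.real Set.univ * C / c)
  filter_upwards [hsmall.eventually (gt_mem_nhds (half_pos hε))] with n hn
  have hD : 0 < ∫ x, g x ^ n ∂μ := (by positivity : 0 < t ^ n * c).trans_le (hden n)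
  rw [Real.dist_eq]
  calc |(∫ x, f x * g x ^ n ∂μ) / ∫ x, g x ^ n ∂μ - f x₀|
      ≤ ε / 2 + μ.real Set.univ * (C * m ^ n) / ∫ x, g x ^ n ∂μ :=
        abs_div_sub_le_of_abs_sub_mul_le hD <| abs_integral_mul_pow_sub_le hf hg hg0
          (half_pos hε).le hm0 (fun x => hC x trivial) hfar n
    _ ≤ ε / 2 + μ.real Set.univ * (C * m ^ n) / (t ^ n * c) := by
        gcongr
        exact hden n
    _ = ε / 2 + μ.real Set.univ * C / c * (m / t) ^ n := by rw [div_pow]; field_simp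
    _ < ε := by linarith

end PowerConcentration

theorem stmt_15_general {G : Type*} [Group G] [TopologicalSpace G]
    [CompactSpace G] [MeasurableSpace G] [BorelSpace G]
    (μ : Measure G) [μ.IsHaarMeasure]
    {H : Type*} [NormedAddCommGroup H] [InnerProductSpace ℂ H]
    (U : G →* (H ≃ₗᵢ[ℂ] H))
    (hcont : ∀ v : H, Continuous fun x => U x v)
    (ξ : H) (hξ : ‖ξ‖ = 1)
    (f : G → ℝ) (hf : Continuous f)
    (hinvf : ∀ x s : G, (∃ c : ℂ, U s ξ = c • ξ) → f (x * s) = f x) :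
    Tendsto
      (fun n : ℕ =>
        (∫ x, f x * ‖(inner ℂ (U x ξ) ξ : ℂ)‖ ^ (2 * n) ∂μ) /
          ∫ x, ‖(inner ℂ (U x ξ) ξ : ℂ)‖ ^ (2 * n) ∂μ)
      atTop (nhds (f 1)) := by
  set g : G → ℝ := fun x => ‖⟪U x ξ, ξ⟫_ℂ‖
  have hg_le : ∀ x, g x ≤ 1 := fun x =>
    (norm_inner_le_norm _ _).trans_eq (by rw [(U x).norm_map, hξ, one_mul])
  have hg_one : g 1 = 1 := by
    simp only [g, map_one, LinearIsometryEquiv.coe_one, id_eq, inner_self_eq_norm_sq_to_K, hξ]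
    norm_num
  have hstab : ∀ x, g x = 1 → f x = f 1 := fun x hx => by
    simpa using hinvf 1 x (exists_eq_smul_of_norm_inner_eq_one ((U x).norm_map ξ ▸ hξ) hξ hx)
  exact (tendsto_integral_mul_pow_div_integral_pow hf ((hcont ξ).inner continuous_const).norm
    (fun x => norm_nonneg _) hg_le hg_one hstab).comp
    (tendsto_atTop_mono (fun n => Nat.le_mul_of_pos_left n two_pos) tendsto_id)

/-- For an irreducible unitary representation `U` of a compact (Lie)
group with highest weight unit vector `ξ` and `g(x) = |⟨U_x ξ, ξ⟩|²`, the probability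
measures with densities `gⁿ/‖gⁿ‖₁` (i.e. `h_n(x) = d_n |⟨U_x ξ, ξ⟩|^{2n}`, where `d_n` is
the normalizing constant) converge weak-* to the Dirac measure at the identity coset of
the stability subgroup `H₀` of `P`: for every continuous function `f` on `G` invariant
under right translation by `H₀ = {s : U_s ξ ∈ ℂξ}`, `∫ f h_n dμ → f(e)`. -/
theorem stmt_15 {G : Type*} [Group G] [TopologicalSpace G] [IsTopologicalGroup G]
    [CompactSpace G] [T2Space G] [MeasurableSpace G] [BorelSpace G]
    (μ : Measure G) [μ.IsHaarMeasure] [IsProbabilityMeasure μ]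
    {H : Type*} [NormedAddCommGroup H] [InnerProductSpace ℂ H] [FiniteDimensional ℂ H]
    (U : G →* (H ≃ₗᵢ[ℂ] H))
    (hcont : ∀ v : H, Continuous fun x => U x v)
    (hirr : ∀ p : Submodule ℂ H, (∀ (x : G), ∀ v ∈ p, U x v ∈ p) → p = ⊥ ∨ p = ⊤)
    (ξ : H) (hξ : ‖ξ‖ = 1)
    (f : G → ℝ) (hf : Continuous f)
    (hinvf : ∀ x s : G, (∃ c : ℂ, U s ξ = c • ξ) → f (x * s) = f x) :
    Tendsto
      (fun n : ℕ =>
        (∫ x, f x * ‖(inner ℂ (U x ξ) ξ : ℂ)‖ ^ (2 * n) ∂μ) /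
          ∫ x, ‖(inner ℂ (U x ξ) ξ : ℂ)‖ ^ (2 * n) ∂μ)
      atTop (nhds (f 1)) :=
  stmt_15_general μ U hcont ξ hξ f hf hinvf
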